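/- Let k, m, r be integers with 1 ≤ m < k and r ≤ ⌈k/m⌉, and consider the r-majority bootstrap percolation process on L(n,k). Suppose U ⊆ [n]² satisfies: U is ℓ₁-connected; all vertices of [n]² within ℓ₁-distance at most 32mk² from U are m-good or active; and U contains an active set S that is a translate of S^k_m(0,0). Then, deterministically, every vertex of U eventually becomes active. -/

import Mathlib

open Finset Filter

namespace Maj

variable {V : Type*}

/-- The set of neighbours of `v` under the adjacency relation `Adj`. -/
def nbrSet (Adj : V → V → Prop) (v : V) : Set V := {u | Adj v u}

/-- One round of the `r`-majority bootstrap percolation process: an inactive vertex `v`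
becomes active if at least `⌈(deg v + r)/2⌉` of its neighbours are active, i.e. if
`deg v + r ≤ 2 * #(active neighbours)`. -/
def majStep (Adj : V → V → Prop) (r : ℤ) (A : Set V) : Set V :=
  A ∪ {v | ((nbrSet Adj v).ncard : ℤ) + r ≤ 2 * ((nbrSet Adj v ∩ A).ncard : ℤ)}

/-- The final (stationary) state of `r`-majority bootstrap percolation started from `A`. -/
def majFinal (Adj : V → V → Prop) (r : ℤ) (A : Set V) : Set V :=
  ⋃ s : ℕ, (majStep Adj r)^[s] A

/-- One round of ordinary bootstrap percolation with activation threshold `j`. -/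
def bootStep (Adj : V → V → Prop) (j : ℕ) (A : Set V) : Set V :=
  A ∪ {v | j ≤ (nbrSet Adj v ∩ A).ncard}

/-- The final state of ordinary bootstrap percolation `B_j(G;A)`. -/
def bootFinal (Adj : V → V → Prop) (j : ℕ) (A : Set V) : Set V :=
  ⋃ s : ℕ, (bootStep Adj j)^[s] A

/-- The vertex set of the `j`-core of the subgraph induced on `U`: the largest `W ⊆ U`
such that every vertex of `W` has at least `j` neighbours in `W`. -/
def coreSet (Adj : V → V → Prop) (j : ℤ) (U : Set V) : Set V :=
  ⋃₀ {W : Set V | W ⊆ U ∧ ∀ v ∈ W, j ≤ ((nbrSet Adj v ∩ W).ncard : ℤ)}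

open scoped Classical in
/-- The probability that the random initial set (each vertex initially active with
probability `p`, independently) satisfies the event `E`. -/
noncomputable def initProb (V : Type*) [Fintype V] (p : ℝ) (E : Set V → Prop) : ℝ :=
  ∑ A : Finset V, if E ↑A then p ^ A.card * (1 - p) ^ (Fintype.card V - A.card) else 0

/-- The toroidal grid `[n]²`. -/
abbrev Torus (n : ℕ) := ZMod n × ZMod n

/-- Adjacency in the graph `L(n,k)`: `v` is joined to `v + w` for
`w ∈ {-k,…,k} × {-1,1}`. -/
def LAdj (n k : ℕ) (u v : Torus n) : Prop :=
  ∃ a b : ℤ, a.natAbs ≤ k ∧ (b = 1 ∨ b = -1) ∧ v = u + ((a : ZMod n), (b : ZMod n))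

/-- `initProb` on the torus `[n]²` (defined as `0` in the degenerate case `n = 0`). -/
noncomputable def torusProb (n : ℕ) (p : ℝ) (E : Set (Torus n) → Prop) : ℝ :=
  if h : n = 0 then 0 else
    haveI : NeZero n := ⟨h⟩
    initProb (Torus n) p E

/-- A perfect matching of the vertex set, as a fixed-point-free involution. -/
def IsPerfectMatching (n : ℕ) (f : Torus n → Torus n) : Prop :=
  Function.Involutive f ∧ ∀ v, f v ≠ v

/-- A `k`-admissible `r`-tuple of perfect matchings of `[n]²`: the matchings are pairwise
disjoint and the union with `L(n,k)` has no multiple edges. -/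
def Admissible (n k : ℕ) {r : ℕ} (M : Fin r → Torus n → Torus n) : Prop :=
  (∀ i, IsPerfectMatching n (M i)) ∧
  (∀ i j, i ≠ j → ∀ v, M i v ≠ M j v) ∧
  (∀ i v, ¬ LAdj n k v (M i v))

/-- Adjacency in `L*(n,k,r) = M₁ ∪ ⋯ ∪ M_r ∪ L(n,k)`. -/
def LStarAdj (n k : ℕ) {r : ℕ} (M : Fin r → Torus n → Torus n) (u v : Torus n) : Prop :=
  LAdj n k u v ∨ ∃ i, M i u = v

open scoped Classical in
/-- The probability that `M_r(L*(n,k,r); p)` disseminates, where the `r` perfect matchings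
are chosen uniformly at random among `k`-admissible `r`-tuples and each vertex is
initially active with probability `p`, independently. -/
noncomputable def starDissemProb (n k r : ℕ) (p : ℝ) : ℝ :=
  if h : n = 0 then 0 else
    haveI : NeZero n := ⟨h⟩
    (∑ M ∈ Finset.univ.filter (fun M : Fin r → Torus n → Torus n => Admissible n k M),
        initProb (Torus n) p (fun A => majFinal (LStarAdj n k M) (r : ℤ) A = Set.univ)) /
      ((Finset.univ.filter (fun M : Fin r → Torus n → Torus n => Admissible n k M)).card : ℝ)

/-- The probability that a uniformly random `k`-admissible `r`-tuple of perfect matchings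
of `[n]²` satisfies the event `E`. -/
noncomputable def admProb (n k r : ℕ) (E : (Fin r → Torus n → Torus n) → Prop) : ℝ :=
  (Nat.card {M : Fin r → Torus n → Torus n // Admissible n k M ∧ E M} : ℝ) /
    (Nat.card {M : Fin r → Torus n → Torus n // Admissible n k M} : ℝ)

/-- `stepsLe Adj d u v`: `v` is reachable from `u` in at most `d` steps of `Adj`. -/
def stepsLe (Adj : V → V → Prop) : ℕ → V → V → Prop
  | 0, u, v => u = v
  | d + 1, u, v => stepsLe Adj d u v ∨ ∃ w, stepsLe Adj d u w ∧ Adj w v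

/-- Graph distance with respect to the relation `Adj`. -/
noncomputable def relDist (Adj : V → V → Prop) (u v : V) : ℕ :=
  sInf {d | stepsLe Adj d u v}

/-- The diameter of a set `B` : the maximal `Adj`-graph distance between two of its points. -/
noncomputable def setDiam (Adj : V → V → Prop) (B : Set V) : ℕ :=
  sSup {d | ∃ u ∈ B, ∃ v ∈ B, relDist Adj u v = d}

/-- `U` induces a connected subgraph with respect to `Adj`. -/
def ConnIn (Adj : V → V → Prop) (U : Set V) : Prop :=
  ∀ u ∈ U, ∀ v ∈ U, Relation.ReflTransGen (fun x y => x ∈ U ∧ y ∈ U ∧ Adj x y) u v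

/-- The connected component of `x` inside `Z` (with respect to `Adj`). -/
def compOf (Adj : V → V → Prop) (Z : Set V) (x : V) : Set V :=
  {y | y ∈ Z ∧ Relation.ReflTransGen (fun a b => a ∈ Z ∧ b ∈ Z ∧ Adj a b) x y}

/-- `B` is a connected component of the subgraph induced on `Z`. -/
def IsComponentOf (Adj : V → V → Prop) (Z B : Set V) : Prop :=
  ∃ x ∈ Z, B = compOf Adj Z x

/-- Adjacency in the toroidal square lattice `L₁(n)`. -/
def l1Adj (n : ℕ) (u v : Torus n) : Prop :=
  (u.1 = v.1 ∧ (v.2 = u.2 + 1 ∨ v.2 = u.2 - 1)) ∨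
    (u.2 = v.2 ∧ (v.1 = u.1 + 1 ∨ v.1 = u.1 - 1))

/-- Adjacency in the toroidal lattice with diagonals `L∞(n)`. -/
def lInfAdj (n : ℕ) (u v : Torus n) : Prop :=
  u ≠ v ∧ (v.1 = u.1 ∨ v.1 = u.1 + 1 ∨ v.1 = u.1 - 1) ∧
    (v.2 = u.2 ∨ v.2 = u.2 + 1 ∨ v.2 = u.2 - 1)

/-- Ceiling division: `cdiv k m = ⌈k/m⌉`. -/
def cdiv (k m : ℕ) : ℕ := (k + m - 1) / m

/-- The sequence `x_i` defining the set `S^k_m(a,b)`. -/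
def xseq (k m a b i : ℕ) : ℕ :=
  if m ≤ i then b + (m + a + 1 - i) * k
  else b + (a + 1) * k + cdiv k m * ∑ j ∈ Finset.Ico i m, j

/-- The set `S^k_m(a,b) ⊆ ℤ²`: the union over `|i| ≤ m+a+1` of `[-x_i, x_i] × {i}`. -/
def Scloud (k m a b : ℕ) : Set (ℤ × ℤ) :=
  {p | p.2.natAbs ≤ m + a + 1 ∧ p.1.natAbs ≤ xseq k m a b p.2.natAbs}

/-- Canonical projection `ℤ² → [n]²`. -/
def proj (n : ℕ) (p : ℤ × ℤ) : Torus n := ((p.1 : ZMod n), (p.2 : ZMod n))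

/-- A vertex `v` is `m`-good (with respect to the active set `A`) if each of the four sets
`v ± {1,…,k} × {1}`, `v ± {1,…,k} × {-1}` contains at least `2⌈k/m⌉` active vertices. -/
def MGood (n k m : ℕ) (A : Set (Torus n)) (v : Torus n) : Prop :=
  ∀ sx sy : ℤ, (sx = 1 ∨ sx = -1) → (sy = 1 ∨ sy = -1) →
    2 * cdiv k m ≤
      {u | u ∈ A ∧ ∃ a : ℤ, 1 ≤ a ∧ a ≤ (k : ℤ) ∧
        u = v + (((sx * a : ℤ) : ZMod n), ((sy : ℤ) : ZMod n))}.ncard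

/-- Endpoints `a_i` of the `t`-tessellation: `a_i = i*t` for `i < ⌊n/t⌋` and `a_{⌊n/t⌋} = n`. -/
def cellEnd (n t i : ℕ) : ℕ := if i = n / t then n else i * t

/-- Cells of the `t`-tessellation `T(n,t)`, identified with `[⌊n/t⌋]²`. -/
abbrev Cell (n t : ℕ) := Torus (n / t)

/-- The set of vertices of `[n]²` in the cell `c = (i,j)` of the `t`-tessellation:
`[a_i+1, a_{i+1}] × [a_j+1, a_{j+1}]`. -/
def cellSet (n t : ℕ) (c : Cell n t) : Set (Torus n) :=
  {v | ∃ x y : ℕ,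
    c.1.val * t + 1 ≤ x ∧ x ≤ cellEnd n t (c.1.val + 1) ∧
    c.2.val * t + 1 ≤ y ∧ y ≤ cellEnd n t (c.2.val + 1) ∧
    v = ((x : ZMod n), (y : ZMod n))}

/-- A cell is `m`-good if every vertex inside it or within `ℓ₁`-distance `32mk²` of it is
`m`-good or active. -/
def CellGood (n t k m : ℕ) (A : Set (Torus n)) (c : Cell n t) : Prop :=
  ∀ w : Torus n, (∃ v ∈ cellSet n t c, stepsLe (l1Adj n) (32 * m * k ^ 2) v w) →
    (MGood n k m A w ∨ w ∈ A)

/-- A cell is a seed if it contains an active translate of `S^k_m(0,0)`. -/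
def IsSeed (n t k m : ℕ) (A : Set (Torus n)) (c : Cell n t) : Prop :=
  ∃ w : Torus n, ∀ p ∈ Scloud k m 0 0,
    w + proj n p ∈ A ∧ w + proj n p ∈ cellSet n t c

/-- `Z ⊆ [N]²` is `ε`-ubiquitous (with `A = 10⁸`). -/
def Ubiquitous (N : ℕ) (ε : ℝ) (Z : Set (Torus N)) : Prop :=
  ConnIn (l1Adj N) Z ∧
  (1 - 10 ^ 8 * ε) * (N : ℝ) ^ 2 ≤ (Z.ncard : ℝ) ∧
  ∀ (j : ℕ) (B : Fin j → Set (Torus N)), 0 < j →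
    (∀ i, (B i).Nonempty ∧ B i ⊆ Zᶜ ∧ ConnIn (lInfAdj N) (B i)) →
    Pairwise (Function.onFun Disjoint B) →
    ∃ i : Fin j, (setDiam (lInfAdj N) (B i) : ℝ) ≤
      10 ^ 8 / Real.log (1 / ε) * Real.log ((N : ℝ) ^ 2 / (j : ℝ))

/-- A `2`-dependent site-percolation model on `[N]²`: the state of each cell `C` is
independent of the joint state of all cells at `ℓ₁`-distance at least `3` from `C`. -/
def TwoDependent (N : ℕ) (μ : PMF (Torus N → Bool)) : Prop :=
  ∀ (C : Torus N) (E : Set (Torus N → Bool)),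
    (∀ ω ω' : Torus N → Bool,
      (∀ C' : Torus N, ¬ stepsLe (l1Adj N) 2 C C' → ω C' = ω' C') → (ω ∈ E ↔ ω' ∈ E)) →
    ∀ b : Bool,
      μ.toOuterMeasure {ω | ω C = b ∧ ω ∈ E} =
        μ.toOuterMeasure {ω | ω C = b} * μ.toOuterMeasure E

/-- `B` is a largest `ℓ₁`-component of `Z`. -/
def IsLargestL1Component (N : ℕ) (Z B : Set (Torus N)) : Prop :=
  IsComponentOf (l1Adj N) Z B ∧
    ∀ B' : Set (Torus N), IsComponentOf (l1Adj N) Z B' → B'.ncard ≤ B.ncard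

/-- Expectation of a real random variable under a `PMF`. -/
noncomputable def pmfExp {α : Type*} (μ : PMF α) (f : α → ℝ) : ℝ :=
  ∑' a, (μ a).toReal * f a

/-- `N_d`: the number of cells belonging to `ℓ∞`-components of the complement of `G₀`
of `ℓ∞`-diameter exactly `d`. -/
noncomputable def NdCount (N : ℕ) (G₀ : Set (Torus N)) (d : ℕ) : ℕ :=
  {C : Torus N | ∃ B : Set (Torus N),
    IsComponentOf (lInfAdj N) G₀ᶜ B ∧ C ∈ B ∧ setDiam (lInfAdj N) B = d}.ncard

/-- `N'_d`: the number of cells belonging to `ℓ∞`-components of the complement of `G₀`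
of `ℓ∞`-diameter at least `d`. -/
noncomputable def NdGeCount (N : ℕ) (G₀ : Set (Torus N)) (d : ℕ) : ℕ :=
  {C : Torus N | ∃ B : Set (Torus N),
    IsComponentOf (lInfAdj N) G₀ᶜ B ∧ C ∈ B ∧ d ≤ setDiam (lInfAdj N) B}.ncard

/-- A collection of sets of cells `B₁,…,B_s` is stable with respect to the tuple `M` of
perfect matchings. -/
def StableColl (n t : ℕ) {r s : ℕ} (M : Fin r → Torus n → Torus n)
    (B : Fin s → Set (Cell n t)) : Prop :=
  ∀ j : Fin s, ∃ v : Fin 4 → Torus n, Function.Injective v ∧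
    ∀ l : Fin 4, (∃ c ∈ B j, v l ∈ cellSet n t c) ∧
      ∃ i : Fin r, ∃ j' : Fin s, ∃ c ∈ B j', M i (v l) ∈ cellSet n t c

/-- Adjacency in the `m`-dimensional grid `[n]^m` (no wrap-around). -/
def gridAdj (n m : ℕ) (u v : Fin m → Fin n) : Prop :=
  ∃ i : Fin m, ((u i : ℕ) + 1 = (v i : ℕ) ∨ (v i : ℕ) + 1 = (u i : ℕ)) ∧
    ∀ j : Fin m, j ≠ i → u j = v j

end Maj

open Maj

/-!
An active translate `w + S(0,0)` grows into an active `w + S(1, m + k)` as long as every vertex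
near `w` is `m`-good or active: first each row is widened by one vertex at a time up to
`S(0, m + 2k)`, then the rows `±(m + 2)` are added. At every new vertex the `m`-good arm pointing
away from the cloud supplies `2⌈k/m⌉` active neighbours, and the profile of `S` (rows shrinking by
`i⌈k/m⌉` near the middle and by `k` further out) puts enough of the remaining neighbours inside
the cloud. Since `S(1, m + k)` contains the translates of `S(0,0)` by the four `ℓ₁`-unit vectors,
the active seed travels along `ℓ₁`-paths through `U`.
-/

namespace Maj

section Bootstrap

variable {V : Type*} (Adj : V → V → Prop) (r : ℤ)

lemma iterate_majStep_mono (A : Set V) : Monotone fun s => (majStep Adj r)^[s] A :=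
  monotone_nat_of_le_succ fun s => by
    rw [Function.iterate_succ_apply']
    exact Set.subset_union_left

lemma subset_majFinal (A : Set V) : A ⊆ majFinal Adj r A :=
  Set.subset_iUnion (fun s => (majStep Adj r)^[s] A) 0

/-- On a finite vertex set the increasing sequence of active sets stabilises, so the final
state is closed under a further round. -/
lemma majStep_majFinal_subset [Finite V] (A : Set V) :
    majStep Adj r (majFinal Adj r A) ⊆ majFinal Adj r A := by
  obtain ⟨N, hN⟩ := WellFoundedGT.monotone_chain_condition ⟨_, iterate_majStep_mono Adj r A⟩
  have hfinal : majFinal Adj r A = (majStep Adj r)^[N] A := by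
    refine Set.Subset.antisymm (Set.iUnion_subset fun s => ?_)
      (Set.subset_iUnion (fun s => (majStep Adj r)^[s] A) N)
    calc (majStep Adj r)^[s] A ⊆ (majStep Adj r)^[max N s] A :=
          iterate_majStep_mono Adj r A (le_max_right N s)
      _ = (majStep Adj r)^[N] A := (hN _ (le_max_left N s)).symm
  calc majStep Adj r (majFinal Adj r A) = (majStep Adj r)^[N + 1] A := by
        rw [hfinal, Function.iterate_succ_apply']
    _ ⊆ majFinal Adj r A := Set.subset_iUnion (fun s => (majStep Adj r)^[s] A) (N + 1)

lemma mem_majFinal_of_le [Finite V] {A : Set V} {v : V}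
    (h : ((nbrSet Adj v).ncard : ℤ) + r ≤ 2 * ((nbrSet Adj v ∩ majFinal Adj r A).ncard : ℤ)) :
    v ∈ majFinal Adj r A :=
  majStep_majFinal_subset Adj r A (Or.inr h)

end Bootstrap

section Torus

variable {n : ℕ}

lemma proj_add (p q : ℤ × ℤ) : proj n (p + q) = proj n p + proj n q := by
  simp [proj]

lemma proj_zero : proj n 0 = 0 := by
  simp [proj]

lemma eq_of_proj_eq {p q : ℤ × ℤ} (h : proj n p = proj n q)
    (h₁ : (p.1 - q.1).natAbs < n) (h₂ : (p.2 - q.2).natAbs < n) : p = q := by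
  have key : ∀ x y : ℤ, (x : ZMod n) = y → (x - y).natAbs < n → x = y := fun x y hxy hlt =>
    sub_eq_zero.1 <| Int.eq_zero_of_dvd_of_natAbs_lt_natAbs
      (by simpa using (ZMod.intCast_eq_intCast_iff_dvd_sub y x n).1 hxy.symm) (by simpa using hlt)
  exact Prod.ext (key _ _ (congrArg Prod.fst h) h₁) (key _ _ (congrArg Prod.snd h) h₂)

lemma nbrSet_LAdj_subset (k : ℕ) (v : Torus n) : nbrSet (LAdj n k) v ⊆
    ↑((Icc (-(k : ℤ)) k ×ˢ ({1, -1} : Finset ℤ)).image fun p => v + proj n p) := by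
  rintro _ ⟨a, b, ha, hb, rfl⟩
  simp only [coe_image, Set.mem_image, mem_coe, mem_product, mem_Icc, mem_insert,
    mem_singleton]
  exact ⟨(a, b), ⟨by omega, hb⟩, rfl⟩

lemma ncard_nbrSet_LAdj_le (k : ℕ) (v : Torus n) : (nbrSet (LAdj n k) v).ncard ≤ 4 * k + 2 := by
  classical
  calc (nbrSet (LAdj n k) v).ncard
      ≤ #((Icc (-(k : ℤ)) k ×ˢ ({1, -1} : Finset ℤ)).image fun p => v + proj n p) := by
        rw [← Set.ncard_coe_finset]
        exact Set.ncard_le_ncard (nbrSet_LAdj_subset k v) (Set.toFinite _)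
    _ ≤ #(Icc (-(k : ℤ)) k) * #({1, -1} : Finset ℤ) := card_image_le.trans (card_product _ _).le
    _ = 4 * k + 2 := by rw [Int.card_Icc]; simp; omega

/-- The offsets `(σ a, ±τ)` with `|a| ≤ k` give distinct neighbours because `2k < n`. -/
lemma card_add_card_le_ncard_nbrSet_inter {k : ℕ} (hkn : 2 * k + 1 ≤ n) (hk : 1 ≤ k)
    {F : Set (Torus n)} {v : Torus n} {σ τ : ℤ} (hσ : σ = 1 ∨ σ = -1) (hτ : τ = 1 ∨ τ = -1)
    {R₁ R₂ : Finset ℤ} (hR₁ : R₁ ⊆ Icc (-(k : ℤ)) k) (hR₂ : R₂ ⊆ Icc (-(k : ℤ)) k)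
    (hF₁ : ∀ a ∈ R₁, v + proj n (σ * a, τ) ∈ F) (hF₂ : ∀ a ∈ R₂, v + proj n (σ * a, -τ) ∈ F) :
    #R₁ + #R₂ ≤ (nbrSet (LAdj n k) v ∩ F).ncard := by
  classical
  have : NeZero n := ⟨by omega⟩
  set P := R₁ ×ˢ {τ} ∪ R₂ ×ˢ {-τ}
  have hdisj : Disjoint (R₁ ×ˢ {τ}) (R₂ ×ˢ {-τ}) :=
    disjoint_product.2 (Or.inr (disjoint_singleton.2 (by omega)))
  have hP : ∀ p ∈ P, (p.1 ∈ R₁ ∧ p.2 = τ ∨ p.1 ∈ R₂ ∧ p.2 = -τ) ∧ p.1.natAbs ≤ k := by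
    rintro ⟨a, y⟩ hp
    simp only [P, mem_union, mem_product, mem_singleton] at hp
    refine ⟨hp, ?_⟩
    have := mem_Icc.1 (hp.elim (fun h => hR₁ h.1) fun h => hR₂ h.1)
    omega
  let g : ℤ × ℤ → Torus n := fun p => v + proj n (σ * p.1, p.2)
  have hinj : Set.InjOn g P := by
    rintro ⟨a, y⟩ hp ⟨a', y'⟩ hp' h
    obtain ⟨hy, ha⟩ := hP _ hp
    obtain ⟨hy', ha'⟩ := hP _ hp'
    have := Prod.ext_iff.1 (eq_of_proj_eq (add_left_cancel h)
      (by rcases hσ with rfl | rfl <;> simp only at * <;> omega) (by simp only at *; omega))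
    simp only at this ⊢
    rcases hσ with rfl | rfl <;> exact Prod.ext (by omega) (by omega)
  have hsub : ↑(P.image g) ⊆ nbrSet (LAdj n k) v ∩ F := by
    simp only [coe_image, Set.image_subset_iff]
    rintro ⟨a, y⟩ hp
    obtain ⟨hy, ha⟩ := hP _ hp
    refine ⟨⟨σ * a, y, by rcases hσ with rfl | rfl <;> simpa, by omega, rfl⟩, ?_⟩
    rcases hy with ⟨ha, rfl⟩ | ⟨ha, rfl⟩
    exacts [hF₁ a ha, hF₂ a ha]
  calc #R₁ + #R₂ = #(P.image g) := by
        rw [card_image_of_injOn hinj, card_union_of_disjoint hdisj]; simp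
    _ = (↑(P.image g) : Set (Torus n)).ncard := (Set.ncard_coe_finset _).symm
    _ ≤ _ := Set.ncard_le_ncard hsub (Set.toFinite _)

lemma exists_active_arm {k m : ℕ} {A : Set (Torus n)} {v : Torus n} (hv : MGood n k m A v)
    {σ τ : ℤ} (hσ : σ = 1 ∨ σ = -1) (hτ : τ = 1 ∨ τ = -1) :
    ∃ R ⊆ Icc 1 (k : ℤ), 2 * cdiv k m ≤ #R ∧ ∀ a ∈ R, v + proj n (σ * a, τ) ∈ A := by
  classical
  set R := {a ∈ Icc 1 (k : ℤ) | v + proj n (σ * a, τ) ∈ A}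
  refine ⟨R, filter_subset _ _, (hv σ τ hσ hτ).trans ?_, fun a ha => (mem_filter.1 ha).2⟩
  calc _ ≤ (↑(R.image fun a => v + proj n (σ * a, τ)) : Set (Torus n)).ncard := by
        refine Set.ncard_le_ncard ?_ (Set.toFinite _)
        rintro _ ⟨hu, a, h₁, h₂, rfl⟩
        exact mem_coe.2 (mem_image_of_mem _ (mem_filter.2 ⟨mem_Icc.2 ⟨h₁, h₂⟩, hu⟩))
    _ ≤ #R := by rw [Set.ncard_coe_finset]; exact card_image_le

/-- The `m`-good arm contributes `2⌈k/m⌉` active neighbours at offsets `1, …, k` of row `τ`,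
disjoint from the offsets `L ⊆ [-k, 0]`. -/
lemma mem_majFinal_of_rows {k m : ℕ} {r : ℤ} {A : Set (Torus n)} (hkn : 2 * k + 1 ≤ n)
    (hk : 1 ≤ k) {v : Torus n} (hv : MGood n k m A v ∨ v ∈ A) {σ τ : ℤ} (hσ : σ = 1 ∨ σ = -1)
    (hτ : τ = 1 ∨ τ = -1) {L D : Finset ℤ} (hL : L ⊆ Icc (-(k : ℤ)) 0)
    (hD : D ⊆ Icc (-(k : ℤ)) k)
    (hLΦ : ∀ a ∈ L, v + proj n (σ * a, τ) ∈ majFinal (LAdj n k) r A)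
    (hDΦ : ∀ a ∈ D, v + proj n (σ * a, -τ) ∈ majFinal (LAdj n k) r A)
    (hcount : 4 * (k : ℤ) + 2 + r ≤ 2 * (#L + #D + 2 * cdiv k m)) :
    v ∈ majFinal (LAdj n k) r A := by
  classical
  have : NeZero n := ⟨by omega⟩
  rcases hv with hv | hv
  swap
  · exact subset_majFinal _ _ _ hv
  obtain ⟨R, hR, hRcard, hRA⟩ := exists_active_arm hv hσ hτ
  have hdisj : Disjoint L R := disjoint_left.2 fun a haL haR => by
    have := mem_Icc.1 (hL haL)
    have := mem_Icc.1 (hR haR)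
    omega
  have hLR : L ∪ R ⊆ Icc (-(k : ℤ)) k :=
    union_subset (hL.trans (Icc_subset_Icc le_rfl (by omega)))
      (hR.trans (Icc_subset_Icc (by omega) le_rfl))
  have hactive := card_add_card_le_ncard_nbrSet_inter hkn hk hσ hτ hLR hD
    (fun a ha => (mem_union.1 ha).elim (hLΦ a) fun haR => subset_majFinal _ _ _ (hRA a haR)) hDΦ
  rw [card_union_of_disjoint hdisj] at hactive
  have hdeg := ncard_nbrSet_LAdj_le k v
  apply mem_majFinal_of_le
  omega

end Torus

section Cloud

variable {k m : ℕ}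

lemma two_le_cdiv (hm : 1 ≤ m) (hmk : m < k) : 2 ≤ cdiv k m := by
  rw [cdiv, Nat.le_div_iff_mul_le (by omega)]
  omega

lemma le_mul_cdiv (hm : 1 ≤ m) : k ≤ m * cdiv k m := by
  have := Nat.div_add_mod (k + m - 1) m
  have := Nat.mod_lt (k + m - 1) (show 0 < m by omega)
  rw [cdiv]
  omega

lemma mul_cdiv_le : m * cdiv k m ≤ k + m - 1 := by
  rw [cdiv, Nat.mul_comm]
  exact Nat.div_mul_le_self _ _

variable {a b : ℕ}

lemma xseq_eq_add (i : ℕ) : xseq k m a b i = b + xseq k m a 0 i := by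
  unfold xseq; split <;> omega

lemma xseq_tip : xseq k m a b (m + a + 1) = b := by
  simp [xseq, show m ≤ m + a + 1 by omega]

lemma xseq_eq_succ_add_of_le {i : ℕ} (h₁ : m ≤ i) (h₂ : i ≤ m + a) :
    xseq k m a b i = xseq k m a b (i + 1) + k := by
  rw [xseq, xseq, if_pos h₁, if_pos (by omega),
    show m + a + 1 - i = m + a + 1 - (i + 1) + 1 by omega, add_one_mul]
  omega

lemma xseq_eq_succ_add_of_lt {i : ℕ} (h : i < m) :
    xseq k m a b i = xseq k m a b (i + 1) + i * cdiv k m := by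
  rcases (Nat.succ_le_of_lt h).lt_or_eq with h' | h'
  · rw [xseq, xseq, if_neg (by omega), if_neg (by omega), sum_eq_sum_Ico_succ_bot h]
    ring
  · subst h'
    rw [xseq, xseq, if_neg (by omega), if_pos le_rfl, Nat.Ico_succ_singleton, sum_singleton,
      show i + 1 + a + 1 - (i + 1) = a + 1 by omega]
    ring

lemma xseq_one (hm : 1 ≤ m) : xseq k m a b 1 = xseq k m a b 0 := by
  simpa using (xseq_eq_succ_add_of_lt (k := k) (a := a) (b := b) hm).symm

lemma xseq_antitone : Antitone (xseq k m a b) := by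
  refine antitone_nat_of_succ_le fun i => ?_
  rcases Nat.lt_or_ge i m with h | h
  · rw [xseq_eq_succ_add_of_lt h]; omega
  · rw [xseq, xseq, if_pos h, if_pos (by omega)]
    have := Nat.mul_le_mul_right k (show m + a + 1 - (i + 1) ≤ m + a + 1 - i by omega)
    omega

lemma add_le_xseq {i : ℕ} (h : i ≤ m + a) : b + k ≤ xseq k m a b i := by
  have := xseq_antitone (k := k) (m := m) (a := a) (b := b) h
  rw [xseq, if_pos (by omega), show m + a + 1 - (m + a) = 1 by omega, one_mul] at this
  exact this

lemma xseq_succ_left {i : ℕ} (h : i ≤ m + a + 1) :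
    xseq k m (a + 1) b i = xseq k m a (b + k) i := by
  unfold xseq
  split
  · rw [show m + (a + 1) + 1 - i = m + a + 1 - i + 1 by omega, add_one_mul]
    ring
  · ring

lemma zero_mem_Scloud : (0 : ℤ × ℤ) ∈ Scloud k m a b := by
  simp [Scloud]

lemma Scloud_mono {b' : ℕ} (h : b ≤ b') : Scloud k m a b ⊆ Scloud k m a b' := by
  rintro p ⟨h₁, h₂⟩
  rw [xseq_eq_add] at h₂
  exact ⟨h₁, by rw [xseq_eq_add]; omega⟩

lemma Scloud_add_subset_succ_left : Scloud k m a (b + k) ⊆ Scloud k m (a + 1) b := by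
  rintro p ⟨h₁, h₂⟩
  exact ⟨by omega, by rwa [xseq_succ_left h₁]⟩

lemma xseq_le_succ_add (hm : 1 ≤ m) (i : ℕ) : xseq k m a b i ≤ xseq k m a b (i + 1) + (k + m) := by
  rcases Nat.lt_or_ge i m with h | h
  · rw [xseq_eq_succ_add_of_lt h]
    have := Nat.mul_le_mul_right (cdiv k m) h.le
    have := mul_cdiv_le (k := k) (m := m)
    omega
  · rw [xseq, xseq, if_pos h, if_pos (by omega)]
    have : m + a + 1 - i ≤ m + a + 1 - (i + 1) + 1 := by omega
    have := Nat.mul_le_mul_right k this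
    rw [add_one_mul] at this
    omega

lemma xseq_zero_le (hm : 1 ≤ m) (i : ℕ) : xseq k m a b 0 ≤ xseq k m a b i + i * (k + m) := by
  induction i with
  | zero => simp
  | succ i ih =>
    have := xseq_le_succ_add (k := k) (a := a) (b := b) hm i
    rw [add_one_mul]
    omega

lemma add_mem_Scloud_one {p d : ℤ × ℤ} (hm : 1 ≤ m) (hk : 1 ≤ k) (hp : p ∈ Scloud k m 0 0)
    (hd : d.1.natAbs + d.2.natAbs ≤ 1) : p + d ∈ Scloud k m 1 (m + k) := by
  obtain ⟨hp₂, hp₁⟩ := hp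
  have hi' : (p + d).2.natAbs ≤ p.2.natAbs + 1 := by simp only [Prod.snd_add]; omega
  have hd₁ : (p + d).1.natAbs ≤ p.1.natAbs + 1 := by simp only [Prod.fst_add]; omega
  refine ⟨by omega, ?_⟩
  generalize p.2.natAbs = i at *
  generalize (p + d).2.natAbs = i' at *
  rcases Nat.lt_or_ge i' (m + 2) with h | h
  · have hwide : xseq k m 1 (m + k) i' = m + 2 * k + xseq k m 0 0 i' := by
      rw [xseq_succ_left (by omega), xseq_eq_add]; ring
    have := xseq_antitone (k := k) (m := m) (a := 0) (b := 0) hi'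
    have := xseq_le_succ_add (k := k) (a := 0) (b := 0) hm i
    omega
  · have hx : xseq k m 0 0 i = 0 := by rw [show i = m + 0 + 1 by omega, xseq_tip]
    rw [show i' = m + 1 + 1 by omega, xseq_tip]
    omega

lemma natAbs_add_natAbs_le_of_mem_Scloud {p : ℤ × ℤ} (hm : 1 ≤ m) (hmk : m < k)
    (hp : p ∈ Scloud k m 1 (m + k)) : p.1.natAbs + p.2.natAbs ≤ 32 * m * k ^ 2 := by
  obtain ⟨hp₂, hp₁⟩ := hp
  have := xseq_antitone (k := k) (m := m) (a := 1) (b := m + k) (Nat.zero_le p.2.natAbs)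
  have := xseq_zero_le (k := k) (a := 1) (b := m + k) hm (m + 1 + 1)
  rw [xseq_tip] at this
  have : (m + 1 + 1) * (k + m) + (m + k) + (m + 2) ≤ 32 * m * k ^ 2 := by nlinarith
  omega

/-- `x_{i-1}` with truncated subtraction is also right for `i = 0`, since `x_1 = x_0`. -/
lemma xseq_widen_count {a b i : ℕ} {r : ℤ} (hm : 1 ≤ m) (hmk : m < k) (hr : r ≤ cdiv k m)
    (hi : i ≤ m + a) :
    4 * (k : ℤ) + 2 + r ≤ 2 * ((xseq k m a b (i + 1) - xseq k m a b i + k : ℤ).toNat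
      + (min (k : ℤ) (xseq k m a b (i - 1) - xseq k m a b i - 1 : ℤ) + 1 + k).toNat
      + 2 * cdiv k m) := by
  have hc := two_le_cdiv hm hmk
  rcases Nat.lt_or_ge i m with him | him
  · have hout := xseq_eq_succ_add_of_lt (k := k) (a := a) (b := b) him
    rcases Nat.eq_zero_or_pos i with rfl | hi₀
    · simp only [zero_mul, add_zero] at hout
      push_cast [hout]
      omega
    · have hin := xseq_eq_succ_add_of_lt (k := k) (a := a) (b := b) (show i - 1 < m by omega)
      rw [Nat.sub_add_cancel (show 1 ≤ i from hi₀)] at hin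
      have : (i - 1) * cdiv k m + cdiv k m = i * cdiv k m := by
        rw [← add_one_mul, Nat.sub_add_cancel (show 1 ≤ i from hi₀)]
      push_cast [hout, hin]
      omega
  · have hout := xseq_eq_succ_add_of_le (k := k) (b := b) him hi
    rcases him.lt_or_eq with him | rfl
    · have hin := xseq_eq_succ_add_of_le (k := k) (a := a) (b := b) (show m ≤ i - 1 by omega)
        (by omega)
      rw [Nat.sub_add_cancel (show 1 ≤ i by omega)] at hin
      push_cast [hout, hin]
      omega
    · have hin := xseq_eq_succ_add_of_lt (k := k) (a := a) (b := b) (show m - 1 < m by omega)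
      rw [Nat.sub_add_cancel hm] at hin
      have : (m - 1) * cdiv k m + cdiv k m = m * cdiv k m := by
        rw [← add_one_mul, Nat.sub_add_cancel hm]
      have := le_mul_cdiv (k := k) hm
      push_cast [hout, hin]
      omega

end Cloud

lemma exists_unit_sign (j : ℤ) : ∃ τ : ℤ, (τ = 1 ∨ τ = -1) ∧ (0 ≤ j ∧ τ = 1 ∨ j < 0 ∧ τ = -1) := by
  rcases le_or_gt 0 j with h | h
  exacts [⟨1, .inl rfl, .inl ⟨h, rfl⟩⟩, ⟨-1, .inr rfl, .inr ⟨h, rfl⟩⟩]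

section Lattice

variable {n : ℕ}

lemma exists_proj_of_l1Adj {u v : Torus n} (h : l1Adj n u v) :
    ∃ d : ℤ × ℤ, d.1.natAbs + d.2.natAbs ≤ 1 ∧ v = u + proj n d := by
  rcases h with ⟨h₁, h₂ | h₂⟩ | ⟨h₂, h₁ | h₁⟩
  · exact ⟨(0, 1), by decide, Prod.ext (by simp [proj, h₁]) (by simp [proj, h₂])⟩
  · exact ⟨(0, -1), by decide, Prod.ext (by simp [proj, h₁]) (by simp [proj, h₂, sub_eq_add_neg])⟩
  · exact ⟨(1, 0), by decide, Prod.ext (by simp [proj, h₁]) (by simp [proj, h₂])⟩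
  · exact ⟨(-1, 0), by decide, Prod.ext (by simp [proj, h₁, sub_eq_add_neg]) (by simp [proj, h₂])⟩

lemma l1Adj_add_proj (u : Torus n) {d : ℤ × ℤ} (hd : d.1.natAbs + d.2.natAbs = 1) :
    l1Adj n u (u + proj n d) := by
  obtain ⟨x, y⟩ := d
  have : x = 0 ∧ (y = 1 ∨ y = -1) ∨ y = 0 ∧ (x = 1 ∨ x = -1) := by omega
  rcases this with ⟨rfl, rfl | rfl⟩ | ⟨rfl, rfl | rfl⟩ <;> simp [l1Adj, proj, sub_eq_add_neg]

lemma stepsLe_add_proj (D : ℕ) (u : Torus n) {q : ℤ × ℤ} (hq : q.1.natAbs + q.2.natAbs ≤ D) :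
    stepsLe (l1Adj n) D u (u + proj n q) := by
  induction D generalizing q with
  | zero =>
    obtain rfl : q = 0 := Prod.ext (show q.1 = 0 by omega) (show q.2 = 0 by omega)
    exact (add_zero u).symm.trans (congrArg (u + ·) proj_zero.symm)
  | succ D ih =>
    by_cases hqD : q.1.natAbs + q.2.natAbs ≤ D
    · exact .inl (ih hqD)
    have hstep : ∀ e : ℤ × ℤ, e.1.natAbs + e.2.natAbs = 1 →
        (q - e).1.natAbs + (q - e).2.natAbs ≤ D → stepsLe (l1Adj n) (D + 1) u (u + proj n q) :=
      fun e he hqe => .inr ⟨_, ih hqe, by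
        simpa [add_assoc, ← proj_add] using l1Adj_add_proj (u + proj n (q - e)) he⟩
    obtain ⟨σ, hσ, hσq⟩ := exists_unit_sign q.1
    obtain ⟨τ, hτ, hτq⟩ := exists_unit_sign q.2
    by_cases hq₁ : q.1 = 0
    · exact hstep (0, τ) (by omega) (by simp only [Prod.fst_sub, Prod.snd_sub]; omega)
    · exact hstep (σ, 0) (by omega) (by simp only [Prod.fst_sub, Prod.snd_sub]; omega)

end Lattice

def cloudAt (n k m a b : ℕ) (w : Torus n) : Set (Torus n) := (w + proj n ·) '' Scloud k m a b

section Growth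

variable {n k m : ℕ} {r : ℤ} {A : Set (Torus n)} {a b : ℕ} {w : Torus n}

lemma cloudAt_mono {b' : ℕ} (h : b ≤ b') : cloudAt n k m a b w ⊆ cloudAt n k m a b' w :=
  Set.image_mono (Scloud_mono h)

lemma add_proj_mem_of_cloudAt_subset {F : Set (Torus n)} (hcl : cloudAt n k m a b w ⊆ F)
    {p q : ℤ × ℤ} (h : p + q ∈ Scloud k m a b) : w + proj n p + proj n q ∈ F := by
  rw [add_assoc, ← proj_add]
  exact hcl ⟨_, h, rfl⟩

lemma add_proj_mul_mem_of_cloudAt_subset {F : Set (Torus n)} (hcl : cloudAt n k m a b w ⊆ F)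
    {X j σ y c : ℤ} (hσ : 0 ≤ X ∧ σ = 1 ∨ X < 0 ∧ σ = -1) (hy : (j + y).natAbs ≤ m + a + 1)
    (hc : ((X.natAbs : ℤ) + c).natAbs ≤ xseq k m a b (j + y).natAbs) :
    w + proj n (X, j) + proj n (σ * c, y) ∈ F :=
  add_proj_mem_of_cloudAt_subset hcl ⟨hy, by
    have : (X + σ * c).natAbs = ((X.natAbs : ℤ) + c).natAbs := by
      rcases hσ with ⟨_, rfl⟩ | ⟨_, rfl⟩ <;> omega
    simpa [this] using hc⟩

lemma mem_majFinal_of_widen (hkn : 2 * k + 1 ≤ n) (hm : 1 ≤ m) (hmk : m < k)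
    (hr : r ≤ cdiv k m) (hcl : cloudAt n k m a b w ⊆ majFinal (LAdj n k) r A) {X j : ℤ}
    (hj : j.natAbs ≤ m + a + 1) (hX : X.natAbs = xseq k m a b j.natAbs + 1)
    (hv : MGood n k m A (w + proj n (X, j)) ∨ w + proj n (X, j) ∈ A) :
    w + proj n (X, j) ∈ majFinal (LAdj n k) r A := by
  set i := j.natAbs
  set x := xseq k m a b i
  obtain ⟨σ, hσ, hXσ⟩ := exists_unit_sign X
  obtain ⟨τ, hτ, hjτ⟩ := exists_unit_sign j
  -- `σ` and `τ` point away from the centre: row `j + τ` is the outer one, `j - τ` the inner one.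
  have hinner : xseq k m a b (j + -τ).natAbs = xseq k m a b (i - 1) := by
    rcases Nat.eq_zero_or_pos i with hi | hi
    · rw [hi, show (j + -τ).natAbs = 1 by omega, xseq_one hm]
    · rw [show (j + -τ).natAbs = i - 1 by omega]
  have hin_ge := add_le_xseq (k := k) (b := b) (show i - 1 ≤ m + a by omega)
  set D := Icc (-(k : ℤ)) (min k (xseq k m a b (i - 1) - x - 1))
  have hDΦ : ∀ c ∈ D, w + proj n (X, j) + proj n (σ * c, -τ) ∈ majFinal (LAdj n k) r A := by
    intro c hc
    have := mem_Icc.1 hc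
    exact add_proj_mul_mem_of_cloudAt_subset hcl hXσ (by omega) (by rw [hinner]; omega)
  have hD : D ⊆ Icc (-(k : ℤ)) k := Icc_subset_Icc le_rfl (min_le_left _ _)
  rcases hj.lt_or_eq with hi | hi
  · have hx_ge := add_le_xseq (k := k) (b := b) (show i ≤ m + a by omega)
    have hx_le := xseq_antitone (k := k) (m := m) (a := a) (b := b) (Nat.le_add_right i 1)
    refine mem_majFinal_of_rows hkn (by omega) hv hσ hτ
      (L := Icc (-(k : ℤ)) (xseq k m a b (i + 1) - x - 1)) (Icc_subset_Icc le_rfl (by omega)) hD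
      (fun c hc => ?_) hDΦ ?_
    · have := mem_Icc.1 hc
      exact add_proj_mul_mem_of_cloudAt_subset hcl hXσ (by omega)
        (by rw [show (j + τ).natAbs = i + 1 by omega]; omega)
    · have := xseq_widen_count (a := a) (b := b) (r := r) hm hmk hr (show i ≤ m + a by omega)
      rw [Int.card_Icc, Int.card_Icc]
      omega
  · have hstep := xseq_eq_succ_add_of_le (k := k) (a := a) (b := b) (show m ≤ i - 1 by omega)
      (by omega)
    rw [Nat.sub_add_cancel (show 1 ≤ i by omega)] at hstep
    refine mem_majFinal_of_rows hkn (by omega) hv hσ hτ (L := ∅) (empty_subset _) hD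
      (fun c hc => absurd hc (notMem_empty c)) hDΦ ?_
    rw [card_empty, Int.card_Icc]
    have := two_le_cdiv hm hmk
    omega

/-- All `2k + 1` neighbours in the row towards the cloud are active. -/
lemma mem_majFinal_of_heighten (hkn : 2 * k + 1 ≤ n) (hm : 1 ≤ m) (hmk : m < k)
    (hr : r ≤ cdiv k m) (hcl : cloudAt n k m a (b + k) w ⊆ majFinal (LAdj n k) r A) {X j : ℤ}
    (hj : j.natAbs = m + a + 2) (hX : X.natAbs ≤ b)
    (hv : MGood n k m A (w + proj n (X, j)) ∨ w + proj n (X, j) ∈ A) :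
    w + proj n (X, j) ∈ majFinal (LAdj n k) r A := by
  obtain ⟨τ, hτ, hjτ⟩ := exists_unit_sign j
  refine mem_majFinal_of_rows hkn (by omega) hv (.inl rfl) hτ (L := ∅) (D := Icc (-(k : ℤ)) k)
    (empty_subset _) subset_rfl (fun c hc => absurd hc (notMem_empty c)) (fun c hc => ?_) ?_
  · have := mem_Icc.1 hc
    refine add_proj_mem_of_cloudAt_subset hcl ⟨by simp only [Prod.snd_add]; omega, ?_⟩
    simp only [Prod.fst_add, Prod.snd_add, one_mul]
    rw [show (j + -τ).natAbs = m + a + 1 by omega, xseq_tip]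
    omega
  · rw [card_empty, Int.card_Icc]
    have := two_le_cdiv hm hmk
    omega

lemma cloudAt_succ_right_subset (hkn : 2 * k + 1 ≤ n) (hm : 1 ≤ m) (hmk : m < k)
    (hr : r ≤ cdiv k m) (hcl : cloudAt n k m a b w ⊆ majFinal (LAdj n k) r A)
    (hgood : ∀ v ∈ cloudAt n k m a (b + 1) w, MGood n k m A v ∨ v ∈ A) :
    cloudAt n k m a (b + 1) w ⊆ majFinal (LAdj n k) r A := by
  rintro _ ⟨⟨X, j⟩, hp, rfl⟩
  obtain ⟨hj, hX⟩ := hp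
  dsimp only at hj hX
  rw [xseq_eq_add, add_right_comm, ← xseq_eq_add] at hX
  rcases Nat.lt_or_ge (xseq k m a b j.natAbs) X.natAbs with h | h
  · exact mem_majFinal_of_widen hkn hm hmk hr hcl hj (by omega) (hgood _ ⟨_, ⟨hj, by
      rw [xseq_eq_add, add_right_comm, ← xseq_eq_add]; omega⟩, rfl⟩)
  · exact hcl ⟨_, ⟨hj, h⟩, rfl⟩

lemma cloudAt_add_right_subset (hkn : 2 * k + 1 ≤ n) (hm : 1 ≤ m) (hmk : m < k)
    (hr : r ≤ cdiv k m) (hcl : cloudAt n k m a b w ⊆ majFinal (LAdj n k) r A) (t : ℕ)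
    (hgood : ∀ v ∈ cloudAt n k m a (b + t) w, MGood n k m A v ∨ v ∈ A) :
    cloudAt n k m a (b + t) w ⊆ majFinal (LAdj n k) r A := by
  induction t with
  | zero => exact hcl
  | succ t ih =>
    exact cloudAt_succ_right_subset hkn hm hmk hr
      (ih fun v hv => hgood v (cloudAt_mono (by omega) hv)) hgood

lemma cloudAt_succ_left_subset (hkn : 2 * k + 1 ≤ n) (hm : 1 ≤ m) (hmk : m < k)
    (hr : r ≤ cdiv k m) (hcl : cloudAt n k m a (b + k) w ⊆ majFinal (LAdj n k) r A)
    (hgood : ∀ v ∈ cloudAt n k m (a + 1) b w, MGood n k m A v ∨ v ∈ A) :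
    cloudAt n k m (a + 1) b w ⊆ majFinal (LAdj n k) r A := by
  rintro _ ⟨⟨X, j⟩, hp, rfl⟩
  obtain ⟨hj, hX⟩ := hp
  rcases Nat.lt_or_ge j.natAbs (m + a + 2) with h | h
  · exact hcl ⟨_, ⟨by omega, by rwa [← xseq_succ_left (by omega)]⟩, rfl⟩
  · rw [show j.natAbs = m + (a + 1) + 1 by omega, xseq_tip] at hX
    exact mem_majFinal_of_heighten hkn hm hmk hr hcl (by omega) hX (hgood _ ⟨_, ⟨hj, by
      rwa [show j.natAbs = m + (a + 1) + 1 by omega, xseq_tip]⟩, rfl⟩)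

lemma cloudAt_one_subset (hkn : 2 * k + 1 ≤ n) (hm : 1 ≤ m) (hmk : m < k) (hr : r ≤ cdiv k m)
    (hcl : cloudAt n k m 0 0 w ⊆ majFinal (LAdj n k) r A)
    (hgood : ∀ v ∈ cloudAt n k m 1 (m + k) w, MGood n k m A v ∨ v ∈ A) :
    cloudAt n k m 1 (m + k) w ⊆ majFinal (LAdj n k) r A := by
  have hwide : cloudAt n k m 0 (0 + (m + k + k)) w ⊆ cloudAt n k m 1 (m + k) w := by
    rw [zero_add]
    exact Set.image_mono Scloud_add_subset_succ_left
  exact cloudAt_succ_left_subset hkn hm hmk hr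
    (by simpa using cloudAt_add_right_subset hkn hm hmk hr hcl _ fun v hv => hgood v (hwide hv))
    hgood

lemma cloudAt_zero_subset_of_l1Adj (hkn : 2 * k + 1 ≤ n) (hm : 1 ≤ m) (hmk : m < k)
    (hr : r ≤ cdiv k m) (hcl : cloudAt n k m 0 0 w ⊆ majFinal (LAdj n k) r A)
    (hgood : ∀ v ∈ cloudAt n k m 1 (m + k) w, MGood n k m A v ∨ v ∈ A) {w' : Torus n}
    (hadj : l1Adj n w w') : cloudAt n k m 0 0 w' ⊆ majFinal (LAdj n k) r A := by
  obtain ⟨d, hd, rfl⟩ := exists_proj_of_l1Adj hadj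
  rintro _ ⟨p, hp, rfl⟩
  have := cloudAt_one_subset hkn hm hmk hr hcl hgood
    ⟨p + d, add_mem_Scloud_one hm (by omega) hp hd, rfl⟩
  change w + proj n (p + d) ∈ _ at this
  rwa [proj_add, add_comm (proj n p), ← add_assoc] at this

end Growth

end Maj

/-- Lemma 2.2 of the paper. If `U` is `ℓ₁`-connected, all vertices within
`ℓ₁`-distance `32mk²` of `U` are `m`-good or active, and `U` contains an active translate of
`S^k_m(0,0)`, then `U` eventually becomes active in the `r`-majority bootstrap percolation
process on `L(n,k)`. -/
theorem statement_4 (n k m : ℕ) (r : ℤ) (hm1 : 1 ≤ m) (hmk : m < k)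
    (hr : r ≤ (cdiv k m : ℤ)) (hkn : 2 * k + 1 ≤ n)
    (A U : Set (Torus n))
    (hconn : ConnIn (l1Adj n) U)
    (hgood : ∀ w : Torus n, (∃ u ∈ U, stepsLe (l1Adj n) (32 * m * k ^ 2) u w) →
      MGood n k m A w ∨ w ∈ A)
    (hseed : ∃ c : Torus n,
      (∀ p ∈ Scloud k m 0 0, c + proj n p ∈ A) ∧
      (∀ p ∈ Scloud k m 0 0, c + proj n p ∈ U)) :
    U ⊆ majFinal (LAdj n k) r A := by
  obtain ⟨c, hcA, hcU⟩ := hseed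
  have hgoodU : ∀ u ∈ U, ∀ v ∈ cloudAt n k m 1 (m + k) u, MGood n k m A v ∨ v ∈ A := by
    rintro u hu _ ⟨p, hp, rfl⟩
    exact hgood _ ⟨u, hu, stepsLe_add_proj _ u (natAbs_add_natAbs_le_of_mem_Scloud hm1 hmk hp)⟩
  have hc : c ∈ U := by simpa [proj_zero] using hcU 0 zero_mem_Scloud
  intro u hu
  have hcloud : cloudAt n k m 0 0 u ⊆ majFinal (LAdj n k) r A := by
    induction hconn c hc u hu with
    | refl => exact fun _ ⟨p, hp, hv⟩ => hv ▸ subset_majFinal _ _ _ (hcA p hp)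
    | tail _ hstep ih =>
      exact cloudAt_zero_subset_of_l1Adj hkn hm1 hmk hr (ih hstep.1) (hgoodU _ hstep.1) hstep.2.2
  simpa [proj_zero] using hcloud ⟨0, zero_mem_Scloud, rfl⟩
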